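/- arXiv:1609.07076 — 8 statements merged into one kernel-verified Lean document; each statement's English description precedes it below -/
import Mathlib

section
/- For every n ≥ 0, the integer D_n = ∏_{p prime, p | s} p^{r_p(n)} divides gcd(C_n^+, C_n^−), where r_2(n) = n+1 and r_p(n) = v_p((n+1)!) for odd primes p. -/
open Finset

/-- `C_n^±` with the sign of `s` carrying the `±`:
`C_0 = 2t + s`, `C_1 = 12t² + 6ts + s²`, `C_n = 2t(2n+1) C_{n-1} + s² C_{n-2}`.
Then `C_n^+ = Cpm s t n` and `C_n^- = Cpm (-s) t n`. -/
def Cpm (s t : ℤ) : ℕ → ℤ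
  | 0 => 2 * t + s
  | 1 => 12 * t ^ 2 + 6 * t * s + s ^ 2
  | n + 2 => 2 * t * (2 * (n + 2) + 1) * Cpm s t (n + 1) + s ^ 2 * Cpm s t n

/-- `r_2(n) = n + 1`, and `r_p(n) = v_p((n+1)!)` for odd primes `p`. -/
def rP (p n : ℕ) : ℕ :=
  if p = 2 then n + 1 else ((n + 1).factorial.factorization p)

/-- `D_n = ∏_{p prime, p ∣ s} p^{r_p(n)}`. -/
def Dn (s : ℤ) (n : ℕ) : ℕ := ∏ p ∈ s.natAbs.primeFactors, p ^ rP p n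


/-!
Unrolling the recurrence gives the closed form
`C_n = ∑_{k + j = n + 1} (2k + j)! / (k! j!) · t^k s^j`.
The coefficient of `t^k s^j` is divisible by `2^k`, since `(2k)! / k! = 2^k (2k - 1)‼`, and
times `j!` it is divisible by `(k + j)!`, so its `p`-adic valuation is at least
`v_p((k + j)!) - j`. Hence for `p ∣ s` every term is divisible by `p^{r_p(n)}`, and distinct
prime powers are coprime.
-/

open Nat

theorem Finset.Nat.sum_antidiagonal_add_two {M : Type*} [AddCommMonoid M] (n : ℕ)
    (f : ℕ × ℕ → M) :
    ∑ x ∈ antidiagonal (n + 2), f x =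
      f (n + 2, 0) + f (n + 1, 1) + ∑ x ∈ antidiagonal n, f (x.1, x.2 + 2) := by
  rw [Nat.sum_antidiagonal_succ', Nat.sum_antidiagonal_succ', ← add_assoc]

lemma Nat.factorial_two_mul (k : ℕ) : (2 * k)! = 2 ^ k * k ! * (2 * k - 1)‼ := by
  rcases k with _ | k
  · rfl
  rw [show 2 * (k + 1) - 1 = 2 * k + 1 by omega, ← doubleFactorial_two_mul,
    show 2 * (k + 1) = 2 * k + 1 + 1 by omega, factorial_eq_mul_doubleFactorial]

lemma Nat.pow_factorization_dvd_mul_pow_of_dvd_mul_factorial {p d c j : ℕ} (hp : p.Prime)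
    (hc : c ≠ 0) (h : d ∣ c * j !) : p ^ d.factorization p ∣ c * p ^ j := by
  have hj : (j !).factorization p ≤ j := by
    have := Fact.mk hp
    rw [factorization_def _ hp]
    exact padicValNat_factorial_le (p := p) j
  have hle : d.factorization p ≤ c.factorization p + j :=
    calc d.factorization p ≤ (c * j !).factorization p :=
          (hp.pow_dvd_iff_le_factorization (mul_ne_zero hc (factorial_ne_zero j))).1
            ((ordProj_dvd d p).trans h)
      _ = c.factorization p + (j !).factorization p := by
          rw [Nat.factorization_mul hc (factorial_ne_zero j)]; rfl
      _ ≤ c.factorization p + j := Nat.add_le_add_left hj _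
  exact (pow_dvd_pow p hle).trans (pow_add p _ j ▸ mul_dvd_mul (ordProj_dvd c p) dvd_rfl)

namespace Cpm

/-- `(2k + j)! / (k! j!)`, the coefficient of `t^k s^j` in `C_n` for `k + j = n + 1`. -/
def coeff (k j : ℕ) : ℕ := (2 * k + j).choose j * (2 * k).descFactorial k

lemma coeff_zero_left (j : ℕ) : coeff 0 j = 1 := by simp [coeff]

lemma coeff_mul_factorial_mul_factorial (k j : ℕ) : coeff k j * (k ! * j !) = (2 * k + j)! := by
  have h := Nat.factorial_mul_descFactorial (show k ≤ 2 * k by omega)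
  rw [show 2 * k - k = k by omega] at h
  rw [← Nat.add_choose_mul_factorial_mul_factorial, ← h, coeff]
  ring

lemma coeff_ne_zero (k j : ℕ) : coeff k j ≠ 0 := by
  intro h
  exact factorial_ne_zero _ (by simpa [h] using (coeff_mul_factorial_mul_factorial k j).symm)

lemma cast_coeff (k j : ℕ) : (coeff k j : ℚ) = (2 * k + j)! / (k ! * j !) := by
  rw [eq_div_iff (by positivity), ← coeff_mul_factorial_mul_factorial]
  push_cast
  ring

lemma coeff_succ_zero (k : ℕ) : coeff (k + 1) 0 = 2 * (2 * k + 1) * coeff k 0 := by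
  rw [← Nat.cast_inj (R := ℚ)]
  push_cast
  rw [cast_coeff, cast_coeff, show 2 * (k + 1) + 0 = 2 * k + 1 + 1 by omega]
  simp only [Nat.add_zero, Nat.factorial_succ]
  push_cast
  field_simp
  ring

lemma coeff_succ_one (k : ℕ) : coeff (k + 1) 1 = 2 * (2 * k + 3) * coeff k 1 := by
  rw [← Nat.cast_inj (R := ℚ)]
  push_cast
  rw [cast_coeff, cast_coeff, show 2 * (k + 1) + 1 = 2 * k + 1 + 1 + 1 by omega]
  simp only [Nat.factorial_succ]
  push_cast
  field_simp
  ring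

lemma coeff_succ_add_two (k j : ℕ) :
    coeff (k + 1) (j + 2) = 2 * (2 * (k + j) + 5) * coeff k (j + 2) + coeff (k + 1) j := by
  rw [← Nat.cast_inj (R := ℚ)]
  push_cast
  rw [cast_coeff, cast_coeff, cast_coeff,
    show 2 * (k + 1) + (j + 2) = 2 * k + j + 1 + 1 + 1 + 1 by omega,
    show 2 * k + (j + 2) = 2 * k + j + 1 + 1 by omega,
    show 2 * (k + 1) + j = 2 * k + j + 1 + 1 by omega]
  simp only [Nat.factorial_succ]
  push_cast
  field_simp
  ring

theorem eq_sum_antidiagonal (s t : ℤ) (n : ℕ) :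
    Cpm s t n = ∑ x ∈ antidiagonal (n + 1), (coeff x.1 x.2 : ℤ) * t ^ x.1 * s ^ x.2 := by
  induction n using Nat.twoStepInduction with
  | zero =>
    simp only [Cpm, Nat.sum_antidiagonal_succ, Nat.antidiagonal_zero, sum_singleton,
      coeff_zero_left, coeff_succ_zero]
    push_cast
    ring
  | one =>
    simp only [Cpm, Nat.sum_antidiagonal_succ, Nat.antidiagonal_zero, sum_singleton,
      coeff_zero_left, coeff_succ_zero, show coeff 1 1 = 6 from rfl]
    push_cast
    ring
  | more n ih₀ ih₁ =>
    have hsum : ∑ x ∈ antidiagonal n,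
          (coeff (x.1 + 1) (x.2 + 2) : ℤ) * t ^ (x.1 + 1) * s ^ (x.2 + 2) =
        2 * t * (2 * (n + 2) + 1) *
            ∑ x ∈ antidiagonal n, (coeff x.1 (x.2 + 2) : ℤ) * t ^ x.1 * s ^ (x.2 + 2) +
          s ^ 2 * ∑ x ∈ antidiagonal n, (coeff (x.1 + 1) x.2 : ℤ) * t ^ (x.1 + 1) * s ^ x.2 := by
      rw [mul_sum, mul_sum, ← sum_add_distrib]
      refine sum_congr rfl fun x hx => ?_
      rw [coeff_succ_add_two, HasAntidiagonal.mem_antidiagonal.1 hx]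
      push_cast
      ring
    rw [Cpm, ih₀, ih₁, Nat.sum_antidiagonal_succ (n := n + 2), Nat.sum_antidiagonal_add_two n,
      Nat.sum_antidiagonal_add_two n, Nat.sum_antidiagonal_succ (n := n), hsum]
    simp only [coeff_zero_left, coeff_succ_zero, coeff_succ_one]
    push_cast
    ring

lemma two_pow_dvd_coeff (k j : ℕ) : 2 ^ k ∣ coeff k j := by
  have h := Nat.factorial_mul_descFactorial (show k ≤ 2 * k by omega)
  rw [show 2 * k - k = k by omega, Nat.factorial_two_mul, mul_comm, mul_right_comm] at h
  have hdesc : 2 ^ k ∣ (2 * k).descFactorial k :=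
    Nat.dvd_of_mul_dvd_mul_right (factorial_pos k) (h ▸ mul_dvd_mul_right (dvd_mul_right _ _) _)
  exact hdesc.mul_left _

lemma factorial_dvd_coeff_mul_factorial (k j : ℕ) : (k + j)! ∣ coeff k j * j ! := by
  have h := Nat.factorial_mul_factorial_dvd_factorial_add k (k + j)
  rw [show k + (k + j) = 2 * k + j by omega, ← coeff_mul_factorial_mul_factorial,
    mul_left_comm] at h
  exact Nat.dvd_of_mul_dvd_mul_left (factorial_pos k) h

lemma pow_rP_dvd_coeff_mul {p k j n : ℕ} (hp : p.Prime) (hkj : k + j = n + 1) :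
    p ^ rP p n ∣ coeff k j * p ^ j := by
  unfold rP
  split_ifs with h2
  · rw [h2, ← hkj, pow_add]
    exact mul_dvd_mul (two_pow_dvd_coeff k j) dvd_rfl
  · rw [← hkj]
    exact Nat.pow_factorization_dvd_mul_pow_of_dvd_mul_factorial hp (coeff_ne_zero k j)
      (factorial_dvd_coeff_mul_factorial k j)

theorem pow_rP_dvd {p : ℕ} (hp : p.Prime) {s : ℤ} (hps : (p : ℤ) ∣ s) (t : ℤ) (n : ℕ) :
    (p : ℤ) ^ rP p n ∣ Cpm s t n := by
  rw [eq_sum_antidiagonal]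
  refine dvd_sum fun x hx => ?_
  have h := Int.natCast_dvd_natCast.2 (pow_rP_dvd_coeff_mul hp (mem_antidiagonal.1 hx))
  push_cast at h
  exact h.trans (mul_dvd_mul (dvd_mul_right _ _) (pow_dvd_pow_of_dvd hps _))

end Cpm

lemma Dn_neg (s : ℤ) (n : ℕ) : Dn (-s) n = Dn s n := by
  simp [Dn]

theorem Dn_dvd_Cpm (s t : ℤ) (n : ℕ) : (Dn s n : ℤ) ∣ Cpm s t n := by
  rw [Dn]
  push_cast
  refine prod_dvd_of_coprime (fun p hp q hq hpq => ?_) fun p hp =>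
    Cpm.pow_rP_dvd (prime_of_mem_primeFactors hp)
      (Int.natCast_dvd.2 (dvd_of_mem_primeFactors hp)) t n
  exact (Nat.isCoprime_iff_coprime.2 ((coprime_primes (prime_of_mem_primeFactors hp)
    (prime_of_mem_primeFactors hq)).2 hpq)).pow

theorem Dn_dvd_gcd_general (s t : ℤ) (n : ℕ) : Dn s n ∣ Int.gcd (Cpm s t n) (Cpm (-s) t n) := by
  have h := Int.dvd_gcd (Dn_dvd_Cpm s t n) (Dn_neg s n ▸ Dn_dvd_Cpm (-s) t n)
  exact_mod_cast h

theorem Dn_dvd_gcd (s t : ℤ) (hs : s ≠ 0) (ht : 0 < t) (hst : Int.gcd s t = 1)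
    (n : ℕ) : Dn s n ∣ Int.gcd (Cpm s t n) (Cpm (-s) t n) :=
  Dn_dvd_gcd_general s t n
end

section
/- For every n ≥ 0, α^{n+1}/(γ·(n+1)^β) ≤ D_n ≤ gcd(2,s)·α^n. -/
/-!
Prime by prime, Legendre's formula `(p - 1) v_p(N!) = N - s_p(N)` pins down the exponent of `p`:
the digit sum satisfies `1 ≤ s_p(N) ≤ (p - 1) · #digits`, and `p ^ #digits ≤ p N`.
Hence `p ^ (N / (p - 1)) ≤ p ^ v_p(N!) · p N` and `p ^ v_p(N!) ≤ p ^ ((N - 1) / (p - 1))`,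
while the prime `2` contributes exactly `2 ^ (n + 1)`. Multiplying over the primes dividing `s`
gives both bounds.
-/

open Finset

/-- `α = ∏_{p prime, p ∣ s} p^(1/(p-1))`. -/
noncomputable def alphaS (s : ℤ) : ℝ :=
  ∏ p ∈ s.natAbs.primeFactors, (p : ℝ) ^ ((1 : ℝ) / ((p : ℝ) - 1))

/-- `β` = number of odd primes dividing `s`. -/
def betaS (s : ℤ) : ℕ := (s.natAbs.primeFactors.erase 2).card

/-- `γ` = product of the odd primes dividing `s`. -/
def gammaS (s : ℤ) : ℕ := ∏ p ∈ s.natAbs.primeFactors.erase 2, p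

theorem Nat.digits_sum_le_mul_length {b : ℕ} (hb : 1 < b) (n : ℕ) :
    (b.digits n).sum ≤ (b - 1) * (b.digits n).length := by
  simpa [mul_comm] using List.sum_le_card_nsmul (b.digits n) (b - 1)
    fun d hd => Nat.le_sub_one_of_lt (Nat.digits_lt_base hb hd)

namespace Nat.Prime

theorem pow_le_rpow_div_sub_one {p k m : ℕ} (hp : p.Prime) (h : (p - 1) * k ≤ m) :
    (p : ℝ) ^ k ≤ (p : ℝ) ^ ((m : ℝ) / (p - 1)) := by
  have hp1 : (1 : ℝ) < p := by exact_mod_cast hp.one_lt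
  rw [← Real.rpow_natCast]
  refine Real.rpow_le_rpow_of_exponent_le hp1.le ?_
  rw [le_div_iff₀ (by linarith), mul_comm]
  have : (((p - 1) * k : ℕ) : ℝ) ≤ m := Nat.cast_le.mpr h
  push_cast [Nat.cast_sub hp.one_le] at this
  exact this

theorem rpow_div_sub_one_le_pow {p k m : ℕ} (hp : p.Prime) (h : m ≤ (p - 1) * k) :
    (p : ℝ) ^ ((m : ℝ) / (p - 1)) ≤ (p : ℝ) ^ k := by
  have hp1 : (1 : ℝ) < p := by exact_mod_cast hp.one_lt
  rw [← Real.rpow_natCast]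
  refine Real.rpow_le_rpow_of_exponent_le hp1.le ?_
  rw [div_le_iff₀ (by linarith), mul_comm]
  have : ((m : ℕ) : ℝ) ≤ ((p - 1) * k : ℕ) := Nat.cast_le.mpr h
  push_cast [Nat.cast_sub hp.one_le] at this
  exact this

theorem pow_factorization_factorial_succ_le {p : ℕ} (hp : p.Prime) (n : ℕ) :
    (p : ℝ) ^ (n + 1).factorial.factorization p ≤ (p : ℝ) ^ ((n : ℝ) / (p - 1)) := by
  have := Fact.mk hp
  refine hp.pow_le_rpow_div_sub_one (Nat.lt_succ_iff.mp ?_)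
  rw [Nat.factorization_def _ hp]
  exact sub_one_mul_padicValNat_factorial_lt_of_ne_zero p n.succ_ne_zero

theorem rpow_le_pow_factorization_factorial_mul {p N : ℕ} (hp : p.Prime) (hN : N ≠ 0) :
    (p : ℝ) ^ ((N : ℝ) / (p - 1)) ≤ (p : ℝ) ^ N.factorial.factorization p * (p * N) := by
  have hLegendre := Nat.sub_one_mul_factorization_factorial (n := N) hp
  have hdigits := Nat.digits_sum_le_mul_length hp.one_lt N
  have hsum := Nat.digit_sum_le p N
  set L := (p.digits N).length
  have hpow : (p : ℝ) ^ L ≤ p * N := by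
    exact_mod_cast Nat.base_pow_length_digits_le p N hp.one_lt hN
  calc (p : ℝ) ^ ((N : ℝ) / (p - 1))
      ≤ (p : ℝ) ^ (N.factorial.factorization p + L) :=
        hp.rpow_div_sub_one_le_pow (by rw [mul_add]; omega)
    _ = (p : ℝ) ^ N.factorial.factorization p * p ^ L := pow_add _ _ _
    _ ≤ (p : ℝ) ^ N.factorial.factorization p * (p * N) := by gcongr

end Nat.Prime

theorem rpow_le_pow_rP_mul {p : ℕ} (hp : p.Prime) (n : ℕ) :
    (p : ℝ) ^ (((n + 1 : ℕ) : ℝ) / (p - 1)) ≤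
      (p : ℝ) ^ rP p n * if p = 2 then 1 else (p : ℝ) * ((n : ℝ) + 1) := by
  by_cases h2 : p = 2
  · subst h2
    norm_num [rP, ← Real.rpow_natCast]
  · simpa [rP, h2] using hp.rpow_le_pow_factorization_factorial_mul n.succ_ne_zero

theorem pow_rP_le {p : ℕ} (hp : p.Prime) (n : ℕ) :
    (p : ℝ) ^ rP p n ≤ (if p = 2 then 2 else 1) * (p : ℝ) ^ ((n : ℝ) / (p - 1)) := by
  by_cases h2 : p = 2
  · subst h2
    norm_num [rP, ← Real.rpow_natCast, pow_succ']
  · simpa [rP, h2] using hp.pow_factorization_factorial_succ_le n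

theorem alphaS_pow (s : ℤ) (k : ℕ) :
    alphaS s ^ k = ∏ p ∈ s.natAbs.primeFactors, (p : ℝ) ^ ((k : ℝ) / (p - 1)) := by
  rw [alphaS, ← prod_pow]
  refine prod_congr rfl fun p _ => ?_
  rw [← Real.rpow_natCast, ← Real.rpow_mul p.cast_nonneg, one_div_mul_eq_div]

theorem cast_Dn (s : ℤ) (n : ℕ) :
    (Dn s n : ℝ) = ∏ p ∈ s.natAbs.primeFactors, (p : ℝ) ^ rP p n := by
  push_cast [Dn]
  rfl

theorem gammaS_pos (s : ℤ) : 0 < gammaS s :=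
  prod_pos fun _ hp => (Nat.prime_of_mem_primeFactors (mem_of_mem_erase hp)).pos

theorem gammaS_mul_pow_betaS (s : ℤ) (x : ℝ) :
    (gammaS s : ℝ) * x ^ betaS s =
      ∏ p ∈ s.natAbs.primeFactors, if p = 2 then 1 else (p : ℝ) * x := by
  rw [prod_ite, prod_const_one, one_mul, filter_ne', prod_mul_distrib, prod_const]
  push_cast [gammaS, betaS]
  rfl

theorem Int.gcd_two_eq_prod {s : ℤ} (hs : s ≠ 0) :
    Int.gcd 2 s = ∏ p ∈ s.natAbs.primeFactors, if p = 2 then 2 else 1 := by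
  show Nat.gcd 2 s.natAbs = _
  rw [prod_ite_eq']
  split_ifs with h
  · exact Nat.gcd_eq_left (Nat.dvd_of_mem_primeFactors h)
  · exact (Nat.prime_two.coprime_iff_not_dvd).mpr fun h2 =>
      h (Nat.mem_primeFactors.mpr ⟨Nat.prime_two, h2, Int.natAbs_ne_zero.mpr hs⟩)

theorem Dn_bounds (s : ℤ) (hs : s ≠ 0) (n : ℕ) :
    alphaS s ^ (n + 1) / ((gammaS s : ℝ) * ((n : ℝ) + 1) ^ betaS s) ≤ (Dn s n : ℝ) ∧
    (Dn s n : ℝ) ≤ (Int.gcd 2 s : ℝ) * alphaS s ^ n := by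
  have hprime {p : ℕ} (hp : p ∈ s.natAbs.primeFactors) : p.Prime :=
    Nat.prime_of_mem_primeFactors hp
  have hγ : (0 : ℝ) < gammaS s := by exact_mod_cast gammaS_pos s
  constructor
  · rw [div_le_iff₀ (by positivity), cast_Dn, gammaS_mul_pow_betaS, ← prod_mul_distrib,
      alphaS_pow]
    exact prod_le_prod (fun _ _ => by positivity) fun p hp => rpow_le_pow_rP_mul (hprime hp) n
  · rw [Int.gcd_two_eq_prod hs, cast_Dn, alphaS_pow]
    push_cast
    rw [← prod_mul_distrib]
    exact prod_le_prod (fun _ _ => by positivity) fun p hp => pow_rP_le (hprime hp) n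
end

section
/- For every n ≥ 0, C_n^± = Σ_{k=0}^{n+1} ((n+1+k)! / (k!·(n+1−k)!)) · t^k · (±s)^{n+1−k} (the identity holding for both choices of sign). -/
open Finset

/-- Auxiliary coefficient: equals `(m+k)!/(k!(m-k)!)` for `k ≤ m`, and `0` for `k > m`. -/
def cc (m k : ℕ) : ℕ := (m + k).choose (2 * k) * (2 * k).choose k * k.factorial

lemma cc_zero (m : ℕ) : cc m 0 = 1 := by simp [cc]

lemma cc_eq_zero {m k : ℕ} (h : m < k) : cc m k = 0 := by
  have : m + k < 2 * k := by omega
  simp [cc, Nat.choose_eq_zero_of_lt this]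

lemma cc_mul (k j : ℕ) :
    cc (k + j) k * (k.factorial * j.factorial) = (2 * k + j).factorial := by
  have h1 : (2 * k).choose k * k.factorial * k.factorial = (2 * k).factorial := by
    have := Nat.choose_mul_factorial_mul_factorial (show k ≤ 2 * k by omega)
    rw [show 2 * k - k = k by omega] at this
    exact this
  have h2 : (2 * k + j).choose (2 * k) * (2 * k).factorial * j.factorial
      = (2 * k + j).factorial := by
    have := Nat.choose_mul_factorial_mul_factorial (show 2 * k ≤ 2 * k + j by omega)
    rw [show 2 * k + j - 2 * k = j by omega] at this
    exact this
  have h3 : cc (k + j) k = (2 * k + j).choose (2 * k) * (2 * k).choose k * k.factorial := by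
    simp [cc, show k + j + k = 2 * k + j by omega]
  calc cc (k + j) k * (k.factorial * j.factorial)
      = (2*k+j).choose (2*k) * ((2*k).choose k * k.factorial * k.factorial) * j.factorial := by
        rw [h3]; ring
    _ = (2*k+j).choose (2*k) * (2*k).factorial * j.factorial := by rw [h1]
    _ = _ := h2

lemma cQ_eq (k j : ℕ) :
    (cc (k + j) k : ℚ) = ((2 * k + j).factorial : ℚ) / (k.factorial * j.factorial) := by
  have hk : (k.factorial : ℚ) ≠ 0 := by exact_mod_cast k.factorial_ne_zero
  have hj : (j.factorial : ℚ) ≠ 0 := by exact_mod_cast j.factorial_ne_zero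
  rw [eq_div_iff (by exact mul_ne_zero hk hj)]
  exact_mod_cast cc_mul k j

lemma key (m k : ℕ) (h : k ≤ m + 1) :
    (cc (m+2) (k+1) : ℚ) = 2 * (2 * (m:ℚ) + 3) * cc (m+1) k + cc m (k+1) := by
  rcases Nat.lt_or_ge k m with hk | hk
  · -- k + 1 ≤ m
    obtain ⟨j, rfl⟩ : ∃ j, m = k + 1 + j := ⟨m - (k+1), by omega⟩
    have e1 : cc (k+1+j+2) (k+1) = cc ((k+1) + (j+2)) (k+1) := by ring_nf
    have e2 : cc (k+1+j+1) k = cc (k + (j+2)) k := by ring_nf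
    have e3 : cc (k+1+j) (k+1) = cc ((k+1) + j) (k+1) := by ring_nf
    rw [e1, e2, e3, cQ_eq, cQ_eq, cQ_eq]
    rw [show 2 * (k+1) + (j+2) = (2*k+j+2) + 1 + 1 by ring,
        show 2 * k + (j + 2) = 2*k+j+2 by ring,
        show 2 * (k+1) + j = 2*k+j+2 by ring]
    rw [Nat.factorial_succ (2*k+j+2+1), Nat.factorial_succ (2*k+j+2),
        Nat.factorial_succ (j+1), Nat.factorial_succ j, Nat.factorial_succ k]
    have hk2 : (k.factorial : ℚ) ≠ 0 := by exact_mod_cast k.factorial_ne_zero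
    have hj2 : (j.factorial : ℚ) ≠ 0 := by exact_mod_cast j.factorial_ne_zero
    push_cast
    field_simp
    ring
  · rcases Nat.eq_or_lt_of_le hk with hk' | hk'
    · -- k = m
      subst hk'
      rw [cc_eq_zero (show m < m + 1 by omega)]
      have e1 : cc (m+2) (m+1) = cc ((m+1) + 1) (m+1) := by ring_nf
      rw [e1, show cc (m+1) m = cc (m + 1) m from rfl, cQ_eq, cQ_eq]
      rw [show 2 * (m+1) + 1 = (2*m+1) + 1 + 1 by ring]
      rw [Nat.factorial_succ (2*m+1+1), Nat.factorial_succ (2*m+1),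
          Nat.factorial_succ m]
      have hm2 : (m.factorial : ℚ) ≠ 0 := by exact_mod_cast m.factorial_ne_zero
      push_cast
      field_simp
      ring
    · -- k = m + 1
      have : k = m + 1 := by omega
      subst this
      rw [cc_eq_zero (show m < m + 1 + 1 by omega)]
      have e1 : cc (m+2) (m+1+1) = cc ((m+2) + 0) (m+2) := by ring_nf
      have e2 : cc (m+1) (m+1) = cc ((m+1) + 0) (m+1) := rfl
      rw [e1, e2, cQ_eq, cQ_eq]
      rw [show 2 * (m+2) + 0 = (2*m+2) + 1 + 1 by ring,
          show 2 * (m+1) + 0 = 2*m+2 by ring]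
      rw [Nat.factorial_succ (2*m+2+1), Nat.factorial_succ (2*m+2),
          Nat.factorial_succ (m+1), Nat.factorial_succ m]
      have hm2 : (m.factorial : ℚ) ≠ 0 := by exact_mod_cast m.factorial_ne_zero
      push_cast
      field_simp
      ring

lemma step (s t : ℚ) (n : ℕ) :
    (∑ k ∈ range (n + 4), (cc (n+3) k : ℚ) * t ^ k * s ^ (n + 3 - k))
      = 2 * t * (2 * ((n:ℚ) + 2) + 1)
          * (∑ k ∈ range (n + 3), (cc (n+2) k : ℚ) * t ^ k * s ^ (n + 2 - k))
        + s ^ 2 * (∑ k ∈ range (n + 2), (cc (n+1) k : ℚ) * t ^ k * s ^ (n + 1 - k)) := by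
  have hL : (∑ k ∈ range (n + 4), (cc (n+3) k : ℚ) * t ^ k * s ^ (n + 3 - k))
      = (∑ k ∈ range (n + 3), (cc (n+3) (k+1) : ℚ) * t ^ (k+1) * s ^ (n + 2 - k))
        + s ^ (n+3) := by
    rw [Finset.sum_range_succ']
    congr 1
    · refine Finset.sum_congr rfl fun k _ => ?_
      have : n + 3 - (k + 1) = n + 2 - k := by omega
      rw [this]
    · simp [cc_zero]
  have hR : s ^ 2 * (∑ k ∈ range (n + 2), (cc (n+1) k : ℚ) * t ^ k * s ^ (n + 1 - k))
      = (∑ k ∈ range (n + 3), (cc (n+1) (k+1) : ℚ) * t ^ (k+1) * s ^ (n + 2 - k))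
        + s ^ (n+3) := by
    have e1 : (∑ k ∈ range (n + 4), (cc (n+1) k : ℚ) * t ^ k * s ^ (n + 3 - k))
        = (∑ k ∈ range (n + 3), (cc (n+1) (k+1) : ℚ) * t ^ (k+1) * s ^ (n + 2 - k))
          + s ^ (n+3) := by
      rw [Finset.sum_range_succ']
      congr 1
      · refine Finset.sum_congr rfl fun k _ => ?_
        have : n + 3 - (k + 1) = n + 2 - k := by omega
        rw [this]
      · simp [cc_zero]
    have e2 : (∑ k ∈ range (n + 4), (cc (n+1) k : ℚ) * t ^ k * s ^ (n + 3 - k))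
        = ∑ k ∈ range (n + 2), (cc (n+1) k : ℚ) * t ^ k * s ^ (n + 3 - k) := by
      rw [Finset.sum_range_succ, Finset.sum_range_succ,
          cc_eq_zero (show n+1 < n+3 by omega), cc_eq_zero (show n+1 < n+2 by omega)]
      push_cast
      ring
    rw [Finset.mul_sum, ← e1, e2]
    refine Finset.sum_congr rfl fun k hk => ?_
    have hk' : k ≤ n + 1 := by
      have := Finset.mem_range.mp hk; omega
    have : n + 3 - k = (n + 1 - k) + 2 := by omega
    rw [this]
    ring
  have hM : 2 * t * (2 * ((n:ℚ) + 2) + 1)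
        * (∑ k ∈ range (n + 3), (cc (n+2) k : ℚ) * t ^ k * s ^ (n + 2 - k))
      = ∑ k ∈ range (n + 3),
          (2 * (2 * ((n:ℚ)+1) + 3) * (cc (n+2) k : ℚ)) * t ^ (k+1) * s ^ (n + 2 - k) := by
    rw [Finset.mul_sum]
    refine Finset.sum_congr rfl fun k _ => ?_
    ring
  rw [hL, hR, hM, ← add_assoc, ← Finset.sum_add_distrib]
  congr 1
  refine Finset.sum_congr rfl fun k hk => ?_
  have hk' : k ≤ n + 2 := by
    have := Finset.mem_range.mp hk; omega
  have := key (n+1) k (by omega)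
  push_cast at this ⊢
  rw [this]
  ring

lemma Cpm_cc (s t : ℤ) (n : ℕ) :
    (Cpm s t n : ℚ)
      = ∑ k ∈ range (n + 2), (cc (n+1) k : ℚ) * (t:ℚ) ^ k * (s:ℚ) ^ (n + 1 - k) := by
  induction n using Nat.strong_induction_on with
  | _ n ih =>
    match n with
    | 0 =>
      simp [Cpm, Finset.sum_range_succ, cc]
      push_cast
      ring
    | 1 =>
      norm_num [Cpm, Finset.sum_range_succ, cc, Nat.choose, Nat.factorial]
      push_cast
      ring
    | (n+2) =>
      rw [show Cpm s t (n+2)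
          = 2 * t * (2 * (n + 2) + 1) * Cpm s t (n + 1) + s ^ 2 * Cpm s t n from rfl]
      push_cast
      rw [ih (n+1) (by omega), ih n (by omega)]
      have := step (s:ℚ) (t:ℚ) n
      rw [show n + 2 + 2 = n + 4 by ring, show n + 2 + 1 = n + 3 by ring,
          show n + 1 + 1 = n + 2 by ring]
      rw [this]

lemma sum_eq (s t : ℚ) (n : ℕ) :
    ∑ k ∈ range (n + 2), (cc (n+1) k : ℚ) * t ^ k * s ^ (n + 1 - k)
      = ∑ k ∈ range (n + 2),
          ((n + 1 + k).factorial : ℚ) / ((k.factorial : ℚ) * ((n + 1 - k).factorial : ℚ))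
            * t ^ k * s ^ (n + 1 - k) := by
  refine Finset.sum_congr rfl fun k hk => ?_
  have hk' : k ≤ n + 1 := by
    have := Finset.mem_range.mp hk; omega
  have h1 : cc (n+1) k = cc (k + (n+1-k)) k := by
    rw [show k + (n+1-k) = n+1 by omega]
  rw [h1, cQ_eq, show 2 * k + (n+1-k) = n + 1 + k by omega]

theorem Cpm_explicit_formula (s t : ℤ) (hs : s ≠ 0) (ht : 0 < t)
    (hst : Int.gcd s t = 1) (n : ℕ) :
    ((Cpm s t n : ℚ) = ∑ k ∈ Finset.range (n + 2),
      ((n + 1 + k).factorial : ℚ) / ((k.factorial : ℚ) * ((n + 1 - k).factorial : ℚ))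
        * (t : ℚ) ^ k * (s : ℚ) ^ (n + 1 - k)) ∧
    ((Cpm (-s) t n : ℚ) = ∑ k ∈ Finset.range (n + 2),
      ((n + 1 + k).factorial : ℚ) / ((k.factorial : ℚ) * ((n + 1 - k).factorial : ℚ))
        * (t : ℚ) ^ k * (-(s : ℚ)) ^ (n + 1 - k)) := by
  constructor
  · rw [Cpm_cc s t n, sum_eq]
  · rw [Cpm_cc (-s) t n]
    push_cast
    exact sum_eq (-(s:ℚ)) (t:ℚ) n
end

section
/- If p is an odd prime dividing s (hence not dividing t), then v_p(C_n^+) ≥ v_p((n+1)!) and v_p(C_n^−) ≥ v_p((n+1)!) for every n ≥ 0. -/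
namespace CpmAux

/-- The coefficient `(2n+2-k)!/(k!(n+1-k)!)` of `t^(n+1-k) s^k` in `C_n`. -/
def A (n k : ℕ) : ℕ := Nat.choose (2*n+2-k) (n+1) * Nat.descFactorial (n+1) (n+1-k)

lemma A_mul_fact {n k : ℕ} (hk : k ≤ n+1) :
    A n k * (k.factorial * (n+1-k).factorial) = (2*n+2-k).factorial := by
  have h1 : n + 1 ≤ 2*n+2-k := by omega
  have hd : (n+1 - (n+1-k)).factorial * (n+1).descFactorial (n+1-k) = (n+1).factorial :=
    Nat.factorial_mul_descFactorial (by omega)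
  rw [show n+1 - (n+1-k) = k by omega] at hd
  have hc := Nat.choose_mul_factorial_mul_factorial h1
  rw [show 2*n+2-k - (n+1) = n+1-k by omega] at hc
  calc A n k * (k.factorial * (n+1-k).factorial)
      = Nat.choose (2*n+2-k) (n+1) *
          (k.factorial * Nat.descFactorial (n+1) (n+1-k)) * (n+1-k).factorial := by
        unfold A; ring
    _ = Nat.choose (2*n+2-k) (n+1) * (n+1).factorial * (n+1-k).factorial := by rw [hd]
    _ = (2*n+2-k).factorial := hc

lemma A_top (n : ℕ) : A n (n+1) = 1 := by
  unfold A
  rw [show 2*n+2-(n+1) = n+1 by omega, show n+1-(n+1) = 0 by omega]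
  simp

lemma A_zero (n : ℕ) : A n (n+2) = 0 := by
  unfold A
  rw [show 2*n+2-(n+2) = n by omega]
  simp [Nat.choose_eq_zero_of_lt]

lemma A_rec {n k : ℕ} (hk : k ≤ n+3) :
    A (n+2) k = 2*(2*n+5) * A (n+1) k + (if 2 ≤ k then A n (k-2) else 0) := by
  rcases Nat.lt_or_ge k (n+3) with hlt | hge
  · -- k ≤ n + 2 : multiply both sides by k! * (n+3-k)! and compare factorials
    have hpos : 0 < k.factorial * (n+3-k).factorial :=
      Nat.mul_pos k.factorial_pos (n+3-k).factorial_pos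
    apply Nat.eq_of_mul_eq_mul_right hpos
    have hL : A (n+2) k * (k.factorial * (n+3-k).factorial) = (2*n+6-k).factorial := by
      have := A_mul_fact (n := n+2) (k := k) (by omega)
      rw [show (n+2)+1-k = n+3-k by omega, show 2*(n+2)+2-k = 2*n+6-k by omega] at this
      exact this
    have hM : A (n+1) k * (k.factorial * (n+2-k).factorial) = (2*n+4-k).factorial := by
      have := A_mul_fact (n := n+1) (k := k) (by omega)
      rw [show (n+1)+1-k = n+2-k by omega, show 2*(n+1)+2-k = 2*n+4-k by omega] at this
      exact this
    rw [hL, add_mul]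
    rcases Nat.lt_or_ge k 2 with h2 | h2
    · rw [if_neg (by omega), zero_mul, add_zero]
      have hfac : (n+3-k).factorial = (n+3-k) * (n+2-k).factorial := by
        rw [show n+3-k = (n+2-k)+1 by omega]
        rw [Nat.factorial_succ, show (n+2-k)+1 = n+3-k by omega]
      calc (2*n+6-k).factorial
          = ((2*n+6-k) * (2*n+5-k)) * (2*n+4-k).factorial := by
            rw [show 2*n+6-k = (2*n+5-k)+1 by omega, Nat.factorial_succ,
                show 2*n+5-k = (2*n+4-k)+1 by omega, Nat.factorial_succ,
                show (2*n+4-k)+1+1 = 2*n+6-k by omega, show (2*n+4-k)+1 = 2*n+5-k by omega]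
            ring
        _ = (2*(2*n+5) * (n+3-k)) * (2*n+4-k).factorial := by
            congr 1
            interval_cases k
            · simp only [Nat.sub_zero]; ring
            · rw [show 2*n+6-1 = 2*n+5 by omega, show 2*n+5-1 = 2*n+4 by omega,
                  show n+3-1 = n+2 by omega]
              ring
        _ = 2*(2*n+5) * (A (n+1) k * (k.factorial * (n+2-k).factorial)) * (n+3-k) := by
            rw [hM]; ring
        _ = 2*(2*n+5) * A (n+1) k * (k.factorial * (n+3-k).factorial) := by
            rw [hfac]; ring
    · rw [if_pos h2]
      obtain ⟨j, rfl⟩ : ∃ j, k = j + 2 := ⟨k - 2, by omega⟩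
      obtain ⟨m, rfl⟩ : ∃ m, n = j + m := ⟨n - j, by omega⟩
      rw [show j+2-2 = j by omega, show 2*(j+m)+6-(j+2) = j+2*m+4 by omega,
          show (j+m)+3-(j+2) = m+1 by omega]
      have hM' : A (j+m+1) (j+2) * ((j+2).factorial * m.factorial)
          = (j+2*m+2).factorial := by
        have := A_mul_fact (n := j+m+1) (k := j+2) (by omega)
        rw [show (j+m+1)+1-(j+2) = m by omega,
            show 2*(j+m+1)+2-(j+2) = j+2*m+2 by omega] at this
        exact this
      have hN : A (j+m) j * (j.factorial * (m+1).factorial) = (j+2*m+2).factorial := by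
        have := A_mul_fact (n := j+m) (k := j) (by omega)
        rw [show (j+m)+1-j = m+1 by omega, show 2*(j+m)+2-j = j+2*m+2 by omega] at this
        exact this
      calc (j+2*m+4).factorial
          = (j+2*m+2+1+1) * ((j+2*m+2+1) * (j+2*m+2).factorial) := by
            rw [show j+2*m+4 = j+2*m+2+1+1 by omega, Nat.factorial_succ, Nat.factorial_succ]
        _ = 2*(2*(j+m)+5) *
              (A (j+m+1) (j+2) * ((j+2).factorial * m.factorial)) * (m+1)
            + ((j+2)*(j+1)) * (A (j+m) j * (j.factorial * (m+1).factorial)) := by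
            rw [hM', hN]; ring
        _ = 2*(2*(j+m)+5) * A (j+m+1) (j+2) * ((j+2).factorial * (m+1).factorial)
            + A (j+m) j * ((j+2).factorial * (m+1).factorial) := by
            rw [show (m+1).factorial = (m+1) * m.factorial from Nat.factorial_succ m,
                show (j+2).factorial = (j+2) * ((j+1) * j.factorial) from by
                  rw [Nat.factorial_succ, Nat.factorial_succ]]
            ring
  · -- k = n + 3
    obtain rfl : k = n + 3 := by omega
    have h1 : A (n+2) (n+3) = 1 := by
      have := A_top (n+2); rwa [show (n+2)+1 = n+3 by omega] at this
    have h0 : A (n+1) (n+3) = 0 := by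
      have := A_zero (n+1); rwa [show (n+1)+2 = n+3 by omega] at this
    rw [show n+3-2 = n+1 by omega, if_pos (by omega), h1, h0, A_top]
    omega

lemma Cpm_eq (s t : ℤ) : ∀ n, Cpm s t n
    = ∑ k ∈ Finset.range (n+2), (A n k : ℤ) * t^(n+1-k) * s^k
  | 0 => by
    rw [show (0:ℕ)+2 = 2 from rfl, Finset.sum_range_succ, Finset.sum_range_one]
    show Cpm s t 0 = _
    rw [Cpm]
    norm_num [A, Nat.descFactorial]
  | 1 => by
    rw [show (1:ℕ)+2 = 3 from rfl, Finset.sum_range_succ, Finset.sum_range_succ,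
        Finset.sum_range_one]
    show Cpm s t 1 = _
    rw [Cpm]
    norm_num [A, Nat.descFactorial, Nat.choose]
  | (n+2) => by
    rw [show Cpm s t (n+2)
        = 2 * t * (2 * (n + 2) + 1) * Cpm s t (n + 1) + s ^ 2 * Cpm s t n from rfl,
      Cpm_eq s t (n+1), Cpm_eq s t n]
    have key : ∀ k ∈ Finset.range (n+4), (A (n+2) k : ℤ) * t^(n+2+1-k) * s^k
        = 2*(2*(n:ℤ)+5) * (A (n+1) k : ℤ) * t^(n+3-k) * s^k
          + (if 2 ≤ k then (A n (k-2) : ℤ) else 0) * t^(n+3-k) * s^k := by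
      intro k hk
      rw [Finset.mem_range] at hk
      rw [A_rec (by omega)]
      push_cast
      rw [show n+2+1-k = n+3-k from rfl]
      split_ifs <;> push_cast <;> ring
    rw [show n+2+2 = n+4 from rfl, Finset.sum_congr rfl key, Finset.sum_add_distrib]
    have e1 : ∑ k ∈ Finset.range (n+4),
        2*(2*(n:ℤ)+5) * (A (n+1) k : ℤ) * t^(n+3-k) * s^k
        = 2 * t * (2 * ((n:ℤ) + 2) + 1) *
            ∑ k ∈ Finset.range (n+3), (A (n+1) k : ℤ) * t^(n+1+1-k) * s^k := by
      rw [Finset.sum_range_succ]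
      have h0 : A (n+1) (n+3) = 0 := by
        have := A_zero (n+1); rwa [show (n+1)+2 = n+3 by omega] at this
      rw [h0, Finset.mul_sum]
      push_cast
      rw [mul_zero, zero_mul, zero_mul, add_zero]
      apply Finset.sum_congr rfl
      intro k hk
      rw [Finset.mem_range] at hk
      rw [show n+3-k = (n+1+1-k)+1 by omega, pow_succ]
      ring
    have e2 : ∑ k ∈ Finset.range (n+4),
        (if 2 ≤ k then (A n (k-2) : ℤ) else 0) * t^(n+3-k) * s^k
        = s^2 * ∑ k ∈ Finset.range (n+2), (A n k : ℤ) * t^(n+1-k) * s^k := by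
      rw [Finset.sum_range_succ', Finset.sum_range_succ']
      rw [if_neg (by omega), if_neg (by omega)]
      rw [Finset.mul_sum]
      simp only [zero_mul, add_zero]
      apply Finset.sum_congr rfl
      intro k hk
      rw [Finset.mem_range] at hk
      rw [if_pos (by omega : 2 ≤ k+1+1), show k+1+1-2 = k by omega,
          show n+3-(k+1+1) = n+1-k by omega]
      ring
    rw [e1, e2]

lemma dvd_Cpm (s t : ℤ) (p : ℕ) (hp : p.Prime) (hps : (p:ℤ) ∣ s) (n : ℕ) :
    (p : ℤ) ^ ((n + 1).factorial.factorization p) ∣ Cpm s t n := by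
  haveI : Fact p.Prime := ⟨hp⟩
  rw [Cpm_eq]
  apply Finset.dvd_sum
  intro k hk
  rw [Finset.mem_range] at hk
  have hk' : k ≤ n + 1 := by omega
  set D : ℕ := Nat.descFactorial (n+1) (n+1-k) with hD
  have hd : k.factorial * D = (n+1).factorial := by
    have := Nat.factorial_mul_descFactorial (n := n+1) (k := n+1-k) (by omega)
    rwa [show n+1 - (n+1-k) = k by omega] at this
  have hvk : (k.factorial).factorization p ≤ k := by
    rw [Nat.factorization_def _ hp]
    have h1 := sub_one_mul_padicValNat_factorial (p := p) k
    have h2 : padicValNat p (k.factorial) ≤ (p-1) * padicValNat p (k.factorial) :=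
      Nat.le_mul_of_pos_left _ (by have := hp.two_le; omega)
    omega
  have hsplit : (n+1).factorial.factorization p
      = (k.factorial).factorization p + D.factorization p := by
    rw [← hd, Nat.factorization_mul k.factorial_ne_zero
      ((by rw [Ne, Nat.descFactorial_eq_zero_iff_lt]; omega))]
    rfl
  -- p ^ v ∣ D * p ^ k  in ℕ
  have hnat : p ^ ((n+1).factorial.factorization p) ∣ D * p ^ k := by
    have h1 : p ^ ((n+1).factorial.factorization p) ∣ p ^ (D.factorization p + k) :=
      pow_dvd_pow p (by omega)
    refine h1.trans ?_
    rw [pow_add]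
    exact mul_dvd_mul (Nat.ordProj_dvd D p) dvd_rfl
  obtain ⟨u, rfl⟩ := hps
  have hint : (p : ℤ) ^ ((n+1).factorial.factorization p) ∣ (D : ℤ) * (p:ℤ) ^ k := by
    exact_mod_cast Int.natCast_dvd_natCast.mpr hnat
  refine hint.trans ⟨(Nat.choose (2*n+2-k) (n+1) : ℤ) * t^(n+1-k) * u^k, ?_⟩
  rw [show A n k = Nat.choose (2*n+2-k) (n+1) * D from rfl]
  push_cast
  ring

end CpmAux

theorem padic_val_Cpm_ge_odd (s t : ℤ) (hs : s ≠ 0) (ht : 0 < t)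
    (hst : Int.gcd s t = 1) (p : ℕ) (hp : p.Prime) (hodd : p ≠ 2)
    (hps : (p : ℤ) ∣ s) (n : ℕ) :
    (p : ℤ) ^ ((n + 1).factorial.factorization p) ∣ Cpm s t n ∧
    (p : ℤ) ^ ((n + 1).factorial.factorization p) ∣ Cpm (-s) t n :=
  ⟨CpmAux.dvd_Cpm s t p hp hps n, CpmAux.dvd_Cpm (-s) t p hp ((dvd_neg).mpr hps) n⟩
end

section
/- If s is even (so v_2(s) ≥ 1 and t is odd), then v_2(C_n^+) ≥ n+1 and v_2(C_n^−) ≥ n+1 for every n ≥ 0. -/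
lemma two_pow_dvd_Cpm_aux (s t : ℤ) (heven : 2 ∣ s) :
    ∀ n : ℕ, (2 : ℤ) ^ (n + 1) ∣ Cpm s t n := by
  obtain ⟨u, rfl⟩ := heven
  intro n
  induction n using Nat.strong_induction_on with
  | _ n ih =>
    match n with
    | 0 => exact ⟨t + u, by simp [Cpm]; ring⟩
    | 1 => exact ⟨3 * t ^ 2 + 3 * t * u + u ^ 2, by simp [Cpm]; ring⟩
    | n + 2 =>
      obtain ⟨a, ha⟩ := ih (n + 1) (by omega)
      obtain ⟨b, hb⟩ := ih n (by omega)
      refine ⟨t * (2 * (n + 2) + 1) * a + u ^ 2 * b, ?_⟩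
      show 2 * t * (2 * (↑n + 2) + 1) * Cpm (2 * u) t (n + 1)
          + (2 * u) ^ 2 * Cpm (2 * u) t n = _
      rw [ha, hb]; ring

theorem two_pow_dvd_Cpm (s t : ℤ) (hs : s ≠ 0) (ht : 0 < t)
    (hst : Int.gcd s t = 1) (heven : 2 ∣ s) (n : ℕ) :
    (2 : ℤ) ^ (n + 1) ∣ Cpm s t n ∧ (2 : ℤ) ^ (n + 1) ∣ Cpm (-s) t n :=
  ⟨two_pow_dvd_Cpm_aux s t heven n,
   two_pow_dvd_Cpm_aux (-s) t (heven.neg_right) n⟩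
end

section
/- The function y(z) = z·log z is strictly increasing on [1/e, ∞), and its inverse z(y) is strictly increasing. Moreover, for every y > e, z_1(y) < z_3(y) < ⋯ < z(y) < ⋯ < z_2(y) < z_0(y): the odd-index iterates increase strictly to below z(y) and the even-index iterates decrease strictly to above z(y). -/
open Real Set

/-- `z(y)`: the inverse function of `y(z) = z log z`, `z ≥ 1/e`. -/
noncomputable def zFun (y : ℝ) : ℝ :=
  Function.invFunOn (fun x : ℝ => x * Real.log x) (Set.Ici (Real.exp (-1))) y

/-- `z_0(y) = y`, `z_n(y) = y / log z_{n-1}(y)` for `n ≥ 1`. -/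
noncomputable def zIter : ℕ → ℝ → ℝ
  | 0, y => y
  | n + 1, y => y / Real.log (zIter n y)

lemma mulLog_strictMonoOn :
    StrictMonoOn (fun x : ℝ => x * Real.log x) (Set.Ici (Real.exp (-1))) := by
  apply strictMonoOn_of_deriv_pos (convex_Ici _)
  · exact Real.continuous_mul_log.continuousOn
  · intro x hx
    rw [interior_Ici] at hx
    have hx0 : (0:ℝ) < x := lt_trans (Real.exp_pos _) hx
    rw [(Real.hasDerivAt_mul_log hx0.ne').deriv]
    have : (-1 : ℝ) < Real.log x := by
      have := Real.log_lt_log (Real.exp_pos (-1)) hx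
      rwa [Real.log_exp] at this
    linarith

lemma mulLog_surj {y : ℝ} (hy : -Real.exp (-1) ≤ y) :
    ∃ x ∈ Set.Ici (Real.exp (-1)), x * Real.log x = y := by
  set f : ℝ → ℝ := fun x => x * Real.log x with hf
  have hab : Real.exp (-1) ≤ Real.exp (|y| + 1) :=
    Real.exp_le_exp.mpr (by have := abs_nonneg y; linarith)
  have hcont : ContinuousOn f (Set.Icc (Real.exp (-1)) (Real.exp (|y| + 1))) := by
    apply ContinuousOn.mul continuousOn_id
    apply Real.continuousOn_log.mono
    intro x hx
    simp only [mem_compl_iff, mem_singleton_iff]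
    have := hx.1
    have h0 := Real.exp_pos (-1)
    intro h; rw [h] at this; linarith
  have hfa : f (Real.exp (-1)) = -Real.exp (-1) := by
    simp [hf, Real.log_exp]
  have hfb : y ≤ f (Real.exp (|y| + 1)) := by
    have h1 : (1:ℝ) ≤ Real.exp (|y| + 1) :=
      Real.one_le_exp (by have := abs_nonneg y; linarith)
    have : f (Real.exp (|y| + 1)) = Real.exp (|y| + 1) * (|y| + 1) := by
      simp [hf, Real.log_exp]
    rw [this]
    calc y ≤ |y| := le_abs_self y
    _ ≤ |y| + 1 := by linarith
    _ ≤ Real.exp (|y| + 1) * (|y| + 1) := by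
        nlinarith [abs_nonneg y]
  have := intermediate_value_Icc hab hcont (Set.mem_Icc.mpr ⟨by rw [hfa]; exact hy, hfb⟩)
  obtain ⟨x, hx, hfx⟩ := this
  exact ⟨x, hx.1, hfx⟩

lemma exp_one_mul_log_lt {y : ℝ} (hy : Real.exp 1 < y) : Real.exp 1 * Real.log y < y := by
  have hy0 : (0:ℝ) < y := lt_trans (Real.exp_pos 1) hy
  have hu : 1 < Real.log y := by
    have := Real.log_lt_log (Real.exp_pos 1) hy
    rwa [Real.log_exp] at this
  have h := Real.add_one_lt_exp (x := Real.log y - 1) (by linarith)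
  have : Real.exp 1 * Real.log y < Real.exp 1 * Real.exp (Real.log y - 1) := by
    have := Real.exp_pos 1
    nlinarith
  calc Real.exp 1 * Real.log y < Real.exp 1 * Real.exp (Real.log y - 1) := this
  _ = Real.exp (1 + (Real.log y - 1)) := (Real.exp_add _ _).symm
  _ = y := by rw [show 1 + (Real.log y - 1) = Real.log y by ring, Real.exp_log hy0]

/-- all iterates stay in `(e, y]`. -/
lemma zIter_bounds {y : ℝ} (hy : Real.exp 1 < y) :
    ∀ n, Real.exp 1 < zIter n y ∧ zIter n y ≤ y := by
  intro n
  induction n with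
  | zero => exact ⟨hy, le_refl _⟩
  | succ n ih =>
    obtain ⟨h1, h2⟩ := ih
    have hy0 : (0:ℝ) < y := lt_trans (Real.exp_pos 1) hy
    have hlog1 : 1 < Real.log (zIter n y) := by
      have := Real.log_lt_log (Real.exp_pos 1) h1
      rwa [Real.log_exp] at this
    have hlogpos : 0 < Real.log (zIter n y) := by linarith
    constructor
    · show Real.exp 1 < y / Real.log (zIter n y)
      rw [lt_div_iff₀ hlogpos]
      have hle : Real.log (zIter n y) ≤ Real.log y :=
        Real.log_le_log (lt_trans (Real.exp_pos 1) h1) h2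
      have := exp_one_mul_log_lt hy
      nlinarith [Real.exp_pos 1]
    · show y / Real.log (zIter n y) ≤ y
      exact le_of_lt (div_lt_self hy0 hlog1)

theorem zFun_strictMono_and_iterates_interlace :
    StrictMonoOn (fun x : ℝ => x * Real.log x) (Set.Ici (Real.exp (-1))) ∧
    StrictMonoOn zFun (Set.Ici (-Real.exp (-1))) ∧
    ∀ y : ℝ, y > Real.exp 1 →
      (∀ k : ℕ, zIter (2 * k + 1) y < zIter (2 * (k + 1) + 1) y) ∧
      (∀ k : ℕ, zIter (2 * (k + 1)) y < zIter (2 * k) y) ∧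
      (∀ k : ℕ, zIter (2 * k + 1) y < zFun y ∧ zFun y < zIter (2 * k) y) := by
  have hsm := mulLog_strictMonoOn
  have hinv : ∀ y : ℝ, -Real.exp (-1) ≤ y →
      zFun y ∈ Set.Ici (Real.exp (-1)) ∧ zFun y * Real.log (zFun y) = y := by
    intro y hy
    obtain ⟨x, hx, hfx⟩ := mulLog_surj hy
    have h1 : zFun y ∈ Set.Ici (Real.exp (-1)) :=
      Function.invFunOn_mem (f := fun x : ℝ => x * Real.log x) ⟨x, hx, hfx⟩
    have h2 := Function.invFunOn_eq (f := fun x : ℝ => x * Real.log x) ⟨x, hx, hfx⟩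
    exact ⟨h1, h2⟩
  refine ⟨hsm, ?_, ?_⟩
  · -- zFun strictly monotone
    intro y1 hy1 y2 hy2 h12
    obtain ⟨hm1, hf1⟩ := hinv y1 hy1
    obtain ⟨hm2, hf2⟩ := hinv y2 hy2
    rw [← hsm.lt_iff_lt hm1 hm2]
    show zFun y1 * Real.log (zFun y1) < zFun y2 * Real.log (zFun y2)
    rw [hf1, hf2]; exact h12
  · intro y hy
    have hy0 : (0:ℝ) < y := lt_trans (Real.exp_pos 1) hy
    have hymem : -Real.exp (-1) ≤ y := by
      have := Real.exp_pos (-1); linarith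
    obtain ⟨hzmem, hfz⟩ := hinv y hymem
    set z := zFun y with hzdef
    have hez : Real.exp 1 < z := by
      have hemem : Real.exp 1 ∈ Set.Ici (Real.exp (-1)) :=
        Set.mem_Ici.mpr (Real.exp_le_exp.mpr (by norm_num))
      rw [← hsm.lt_iff_lt hemem hzmem]
      show Real.exp 1 * Real.log (Real.exp 1) < z * Real.log z
      rw [Real.log_exp, hfz, mul_one]; exact hy
    have hz0 : (0:ℝ) < z := lt_trans (Real.exp_pos 1) hez
    have hlogz : 1 < Real.log z := by
      have := Real.log_lt_log (Real.exp_pos 1) hez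
      rwa [Real.log_exp] at this
    have hlogzpos : 0 < Real.log z := by linarith
    have hgz : y / Real.log z = z := by
      rw [← hfz]; field_simp
    have hzy : z < y := by nlinarith
    -- antitone fact
    have hanti : ∀ s t : ℝ, Real.exp 1 < s → s < t → y / Real.log t < y / Real.log s := by
      intro s t hs hst
      have hls : 0 < Real.log s := by
        have := Real.log_lt_log (Real.exp_pos 1) hs
        rw [Real.log_exp] at this; linarith
      exact div_lt_div_of_pos_left hy0 hls
        (Real.log_lt_log (lt_trans (Real.exp_pos 1) hs) hst)
    have hbd := zIter_bounds hy
    -- main induction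
    have key : ∀ k : ℕ, z < zIter (2 * k) y ∧ zIter (2 * k + 2) y < zIter (2 * k) y := by
      intro k
      induction k with
      | zero =>
        have hz0lt : z < zIter 0 y := by simpa [zIter] using hzy
        refine ⟨hz0lt, ?_⟩
        have h1lt : zIter 1 y < z := by
          have := hanti z y hez hzy
          rw [hgz] at this
          simpa [zIter] using this
        have h1e : Real.exp 1 < zIter 1 y := (hbd 1).1
        have hlog1 : 1 < Real.log (zIter 1 y) := by
          have := Real.log_lt_log (Real.exp_pos 1) h1e
          rwa [Real.log_exp] at this
        show y / Real.log (zIter 1 y) < y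
        exact div_lt_self hy0 hlog1
      | succ k ih =>
        obtain ⟨ihz, ihdec⟩ := ih
        -- z_{2k+1} = g z_{2k} < g z = z
        have hodd_lt : zIter (2 * k + 1) y < z := by
          have := hanti z (zIter (2 * k) y) hez ihz
          rw [hgz] at this
          simpa [zIter] using this
        have hodd_e : Real.exp 1 < zIter (2 * k + 1) y := (hbd _).1
        -- z_{2k+2} = g z_{2k+1} > g z = z
        have heven_gt : z < zIter (2 * k + 2) y := by
          have := hanti (zIter (2 * k + 1) y) z hodd_e hodd_lt
          rw [hgz] at this
          simpa [zIter] using this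
        have h2k1 : 2 * (k + 1) = 2 * k + 2 := by ring
        refine ⟨by rw [h2k1]; exact heven_gt, ?_⟩
        -- z_{2k+3} > z_{2k+1} since z_{2k+2} < z_{2k}
        have heven_e : Real.exp 1 < zIter (2 * k + 2) y := lt_trans hez heven_gt
        have hodd_inc : zIter (2 * k + 1) y < zIter (2 * k + 3) y := by
          have := hanti (zIter (2 * k + 2) y) (zIter (2 * k) y) heven_e ihdec
          simpa [zIter, show 2 * k + 2 + 1 = 2 * k + 3 from rfl] using this
        -- z_{2k+4} < z_{2k+2}
        have : zIter (2 * k + 4) y < zIter (2 * k + 2) y := by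
          have := hanti (zIter (2 * k + 1) y) (zIter (2 * k + 3) y) hodd_e hodd_inc
          simpa [zIter, show 2 * k + 3 + 1 = 2 * k + 4 from rfl,
            show 2 * k + 1 + 1 = 2 * k + 2 from rfl] using this
        rw [show 2 * (k + 1) + 2 = 2 * k + 4 by ring, h2k1]
        exact this
    have hodd_lt_z : ∀ k : ℕ, zIter (2 * k + 1) y < z := by
      intro k
      have := hanti z (zIter (2 * k) y) hez (key k).1
      rw [hgz] at this
      simpa [zIter] using this
    refine ⟨?_, ?_, ?_⟩
    · intro k
      have heven_e : Real.exp 1 < zIter (2 * k + 2) y := (hbd _).1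
      have hdec : zIter (2 * k + 2) y < zIter (2 * k) y := (key k).2
      have := hanti (zIter (2 * k + 2) y) (zIter (2 * k) y) heven_e hdec
      rw [show 2 * (k + 1) + 1 = 2 * k + 2 + 1 by ring]
      simpa [zIter] using this
    · intro k
      rw [show 2 * (k + 1) = 2 * k + 2 by ring]
      exact (key k).2
    · intro k
      exact ⟨hodd_lt_z k, (key k).1⟩
end

section
/- For every y > e and every integer n ≥ 2, |z(y) − z_n(y)| ≤ (log y)^{⌊n/2⌋} · z_1(y) · log log z(y) / ( (log z_1(y))^{n−1} · (log z(y))^{⌊n/2⌋+1} ). -/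
open Real

/-!
Write `z = z(y)`, so that `z log z = y`, and `T w = y / log w`, so that `z_{n+1} = T z_n` and `z`
is the fixed point of `T`. From `T w - z = z (log z - log w) / log w` and `log a - log b ≤ (a - b) / b`,
one step of `T` multiplies the error `|z - w|` by at most `1 / log z_1` when `w ≥ z`, and by at
most `(log y / log z) / log z_1` when `w ≤ z` (using `w ≥ z_1 = y / log y`). The iterates stay in
`[z_1, y]` and alternate around `z`, starting above it, so the two factors alternate; `⌊n/2⌋` of the
first `n - 1` steps are of the second kind, and the first error is exactly
`z - z_1 = z_1 log log z / log z`.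
-/

open Set

lemma exists_mul_log_eq {y : ℝ} (hy : -exp (-1) ≤ y) : ∃ x ∈ Ici (exp (-1)), x * log x = y := by
  set t := max y 0
  have hlo : exp (-1) * log (exp (-1)) ≤ y := by rw [log_exp]; linarith
  have hhi : y ≤ exp t * log (exp t) := by
    rw [log_exp]
    nlinarith [le_max_left y 0, le_max_right y 0, one_le_exp (le_max_right y 0)]
  have hle : exp (-1) ≤ exp t := exp_le_exp.mpr (by linarith [le_max_right y 0])
  obtain ⟨x, hx, hxy⟩ :=
    intermediate_value_Icc hle continuous_mul_log.continuousOn ⟨hlo, hhi⟩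
  exact ⟨x, hx.1, hxy⟩

lemma zFun_mul_log_zFun {y : ℝ} (hy : -exp (-1) ≤ y) : zFun y * log (zFun y) = y :=
  Function.invFunOn_eq (exists_mul_log_eq hy)

lemma exp_one_lt_zFun {y : ℝ} (hy : exp 1 < y) : exp 1 < zFun y := by
  have hy' : -exp (-1) ≤ y := by linarith [exp_pos (-1), exp_pos 1]
  have hz0 : 0 < zFun y := (exp_pos (-1)).trans_le (Function.invFunOn_mem (exists_mul_log_eq hy'))
  have hzy := zFun_mul_log_zFun hy'
  by_contra! h
  have : log (zFun y) ≤ 1 := by rw [← log_exp 1]; exact log_le_log hz0 h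
  nlinarith

lemma one_lt_log_of_exp_one_lt {x : ℝ} (hx : exp 1 < x) : 1 < log x :=
  (lt_log_iff_exp_lt ((exp_pos 1).trans hx)).mpr hx

lemma exp_one_lt_mul_log {z : ℝ} (hz : exp 1 < z) : exp 1 < z * log z := by
  have := one_lt_log_of_exp_one_lt hz
  nlinarith [exp_pos 1]

lemma exp_one_lt_div_log {y : ℝ} (hy : exp 1 < y) : exp 1 < y / log y := by
  have hy0 : 0 < y := (exp_pos 1).trans hy
  have hlogy : 0 < log y := one_pos.trans (one_lt_log_of_exp_one_lt hy)
  have h := log_lt_sub_one_of_pos (div_pos hy0 (exp_pos 1)) (by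
    rw [Ne, div_eq_one_iff_eq (exp_pos 1).ne']; exact hy.ne')
  rw [log_div hy0.ne' (exp_pos 1).ne', log_exp] at h
  rw [lt_div_iff₀ hlogy, mul_comm, ← lt_div_iff₀ (exp_pos 1)]
  linarith

lemma log_sub_log_le_div {a b : ℝ} (ha : 0 < a) (hb : 0 < b) : log a - log b ≤ (a - b) / b := by
  have h := log_le_sub_one_of_pos (div_pos ha hb)
  rwa [log_div ha.ne' hb.ne', div_sub_one hb.ne'] at h

section Step

variable {y z w : ℝ}

lemma div_log_sub_eq (hzy : z * log z = y) (hw : log w ≠ 0) :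
    y / log w - z = z * (log z - log w) / log w := by
  rw [← hzy]; field_simp

lemma div_log_le_of_le (hz : 1 < z) (hzy : z * log z = y) (hzw : z ≤ w) : y / log w ≤ z := by
  have hlog : log z ≤ log w := log_le_log (by linarith) hzw
  have h := div_log_sub_eq hzy (log_pos (hz.trans_le hzw)).ne'
  have : z * (log z - log w) / log w ≤ 0 :=
    div_nonpos_of_nonpos_of_nonneg (mul_nonpos_of_nonneg_of_nonpos (by linarith) (by linarith))
      (by linarith [log_pos hz])
  linarith

lemma le_div_log_of_le (hw : 1 < w) (hzy : z * log z = y) (hwz : w ≤ z) : z ≤ y / log w := by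
  have hlog : log w ≤ log z := log_le_log (by linarith) hwz
  have h := div_log_sub_eq hzy (log_pos hw).ne'
  have : 0 ≤ z * (log z - log w) / log w :=
    div_nonneg (mul_nonneg (by linarith) (by linarith)) (log_pos hw).le
  linarith

lemma abs_sub_div_log_le_of_le (hz : 1 < z) (hzy : z * log z = y) (hzw : z ≤ w) :
    |z - y / log w| ≤ |z - w| / log w := by
  have hz0 : 0 < z := by linarith
  have hlogw : 0 < log w := log_pos (hz.trans_le hzw)
  rw [abs_of_nonneg (sub_nonneg.mpr (div_log_le_of_le hz hzy hzw)),
    abs_of_nonpos (sub_nonpos.mpr hzw), neg_sub]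
  calc z - y / log w = z * (log w - log z) / log w := by
        rw [← neg_sub, div_log_sub_eq hzy hlogw.ne']; ring
    _ ≤ z * ((w - z) / z) / log w := by
        gcongr; exact log_sub_log_le_div (by linarith) hz0
    _ = (w - z) / log w := by field_simp

lemma abs_sub_div_log_le_of_ge (hw : 1 < w) (hzy : z * log z = y) (hwz : w ≤ z) :
    |z - y / log w| ≤ |z - w| * (z / w) / log w := by
  have hw0 : 0 < w := by linarith
  rw [abs_sub_comm, abs_of_nonneg (sub_nonneg.mpr (le_div_log_of_le hw hzy hwz)),
    abs_of_nonneg (sub_nonneg.mpr hwz)]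
  calc y / log w - z = z * (log z - log w) / log w := div_log_sub_eq hzy (log_pos hw).ne'
    _ ≤ z * ((z - w) / w) / log w := by
        have := log_pos hw
        gcongr
        · linarith
        · exact log_sub_log_le_div (by linarith) hw0
    _ = (z - w) * (z / w) / log w := by ring

end Step

lemma div_log_mem_Icc {y w : ℝ} (hy : exp 1 < y) (hw : w ∈ Icc (y / log y) y) :
    y / log w ∈ Icc (y / log y) y := by
  have hz1 := exp_one_lt_div_log hy
  have hw0 : 0 < w := (exp_pos 1).trans (hz1.trans_le hw.1)
  have hlogw : 1 < log w := one_lt_log_of_exp_one_lt (hz1.trans_le hw.1)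
  have hy0 : 0 < y := (exp_pos 1).trans hy
  exact ⟨div_le_div_of_nonneg_left hy0.le (by linarith) (log_le_log hw0 hw.2),
    div_le_self hy0.le hlogw.le⟩

lemma zIter_mem_Icc {y : ℝ} (hy : exp 1 < y) (n : ℕ) : zIter n y ∈ Icc (y / log y) y := by
  induction n with
  | zero =>
    have hlogy : 1 ≤ log y := (one_lt_log_of_exp_one_lt hy).le
    exact ⟨div_le_self ((exp_pos 1).trans hy).le hlogy, le_rfl⟩
  | succ n ih => exact div_log_mem_Icc hy ih

lemma zIter_alternates {y z : ℝ} (hz : exp 1 < z) (hzy : z * log z = y) (n : ℕ) :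
    (Even n → z ≤ zIter n y) ∧ (Odd n → zIter n y ≤ z) := by
  have hy : exp 1 < y := hzy ▸ exp_one_lt_mul_log hz
  induction n with
  | zero =>
    refine ⟨fun _ => ?_, fun h => absurd h Nat.not_odd_zero⟩
    have := one_lt_log_of_exp_one_lt hz
    show z ≤ y
    nlinarith [exp_pos 1]
  | succ n ih =>
    have hw : 1 < zIter n y :=
      (one_lt_exp_iff.mpr one_pos).trans ((exp_one_lt_div_log hy).trans_le (zIter_mem_Icc hy n).1)
    rcases Nat.even_or_odd n with hev | hodd
    · exact ⟨fun h => absurd h (Nat.not_even_iff_odd.mpr hev.add_one),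
        fun _ => div_log_le_of_le ((one_lt_exp_iff.mpr one_pos).trans hz) hzy (ih.1 hev)⟩
    · exact ⟨fun _ => le_div_log_of_le hw hzy (ih.2 hodd),
        fun h => absurd h (Nat.not_odd_iff_even.mpr hodd.add_one)⟩

lemma le_mul_pow_div_pow_of_alternating {e : ℕ → ℝ} {a r : ℝ} (ha : 0 < a) (hr : 0 ≤ r)
    (heven : ∀ n, 1 ≤ n → Even n → e (n + 1) ≤ e n / a)
    (hodd : ∀ n, Odd n → e (n + 1) ≤ e n * r / a) {n : ℕ} (hn : 1 ≤ n) :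
    e n ≤ e 1 * r ^ (n / 2) / a ^ (n - 1) := by
  induction n, hn using Nat.le_induction with
  | base => simp
  | succ n hn ih =>
    have hsub : n + 1 - 1 = n - 1 + 1 := by omega
    rcases Nat.even_or_odd n with hev | hodd'
    · have hdiv : (n + 1) / 2 = n / 2 := by rcases hev with ⟨k, rfl⟩; omega
      calc e (n + 1) ≤ e n / a := heven n hn hev
        _ ≤ e 1 * r ^ (n / 2) / a ^ (n - 1) / a := by gcongr
        _ = e 1 * r ^ ((n + 1) / 2) / a ^ (n + 1 - 1) := by
          rw [hdiv, hsub, pow_succ, div_div]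
    · have hdiv : (n + 1) / 2 = n / 2 + 1 := by rcases hodd' with ⟨k, rfl⟩; omega
      calc e (n + 1) ≤ e n * r / a := hodd n hodd'
        _ ≤ e 1 * r ^ (n / 2) / a ^ (n - 1) * r / a := by gcongr
        _ = e 1 * r ^ ((n + 1) / 2) / a ^ (n + 1 - 1) := by
          rw [hdiv, hsub, pow_succ, pow_succ]; field_simp

lemma abs_sub_zIter_le {y z : ℝ} (hz : exp 1 < z) (hzy : z * log z = y) {n : ℕ} (hn : 1 ≤ n) :
    |z - zIter n y| ≤ |z - zIter 1 y| * (log y / log z) ^ (n / 2) / log (y / log y) ^ (n - 1) := by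
  have hy : exp 1 < y := hzy ▸ exp_one_lt_mul_log hz
  have hz1 : exp 1 < y / log y := exp_one_lt_div_log hy
  have hz1pos : 0 < y / log y := (exp_pos 1).trans hz1
  have hz0 : 0 < z := (exp_pos 1).trans hz
  have hlogz : 1 < log z := one_lt_log_of_exp_one_lt hz
  have hlogz1 : 1 < log (y / log y) := one_lt_log_of_exp_one_lt hz1
  have hlogy : 0 < log y := one_pos.trans (one_lt_log_of_exp_one_lt hy)
  refine le_mul_pow_div_pow_of_alternating (e := fun k => |z - zIter k y|) (by linarith)
    (by positivity) (fun k _ hev => ?_) (fun k hodd => ?_) hn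
  · have hzw := (zIter_alternates hz hzy k).1 hev
    have hw := (zIter_mem_Icc hy k).1
    calc |z - zIter (k + 1) y| ≤ |z - zIter k y| / log (zIter k y) :=
          abs_sub_div_log_le_of_le ((one_lt_exp_iff.mpr one_pos).trans hz) hzy hzw
      _ ≤ |z - zIter k y| / log (y / log y) := by gcongr
  · have hwz := (zIter_alternates hz hzy k).2 hodd
    have hw := (zIter_mem_Icc hy k).1
    have hw1 : 1 < zIter k y := (one_lt_exp_iff.mpr one_pos).trans (hz1.trans_le hw)
    have hratio : z / zIter k y ≤ log y / log z := by
      calc z / zIter k y ≤ z / (y / log y) := by gcongr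
        _ = log y / log z := by rw [← hzy]; field_simp
    calc |z - zIter (k + 1) y| ≤ |z - zIter k y| * (z / zIter k y) / log (zIter k y) :=
          abs_sub_div_log_le_of_ge hw1 hzy hwz
      _ ≤ |z - zIter k y| * (log y / log z) / log (y / log y) := by gcongr

lemma sub_zIter_one_eq {y z : ℝ} (hz : exp 1 < z) (hzy : z * log z = y) :
    z - zIter 1 y = zIter 1 y * log (log z) / log z := by
  have hz0 : 0 < z := (exp_pos 1).trans hz
  have hlogz : 0 < log z := one_pos.trans (one_lt_log_of_exp_one_lt hz)
  have hlogy : log y = log z + log (log z) := by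
    rw [← hzy, log_mul hz0.ne' hlogz.ne']
  have hy : exp 1 < y := hzy ▸ exp_one_lt_mul_log hz
  have hlogy0 : 0 < log y := one_pos.trans (one_lt_log_of_exp_one_lt hy)
  show z - y / log y = y / log y * log (log z) / log z
  field_simp
  linear_combination (log z + log (log z)) * hzy + z * log z * hlogy

theorem zFun_sub_zIter_bound (y : ℝ) (hy : y > Real.exp 1) (n : ℕ) (hn : 2 ≤ n) :
    |zFun y - zIter n y| ≤
      (Real.log y) ^ (n / 2) * zIter 1 y * Real.log (Real.log (zFun y)) /
        ((Real.log (zIter 1 y)) ^ (n - 1) * (Real.log (zFun y)) ^ (n / 2 + 1)) := by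
  set z := zFun y
  have hz : exp 1 < z := exp_one_lt_zFun hy
  have hzy : z * log z = y := zFun_mul_log_zFun (by linarith [exp_pos (-1), exp_pos 1])
  have hz1_le : zIter 1 y ≤ z := (zIter_alternates hz hzy 1).2 odd_one
  calc |z - zIter n y|
      ≤ |z - zIter 1 y| * (log y / log z) ^ (n / 2) / log (zIter 1 y) ^ (n - 1) :=
        abs_sub_zIter_le hz hzy (by omega)
    _ = _ := by
      rw [abs_of_nonneg (sub_nonneg.mpr hz1_le), sub_zIter_one_eq hz hzy, div_pow]
      field_simp
      ring
end

section
/- Fix σ > 0. For every integer n ≥ 0 there exists a constant c > 0 such that |z_n(σ·log N) − σ·z_n(log N)| ≤ c·σ·z_n(log N)/log log N for all sufficiently large N; that is, z_n(σ·log N) = σ·z_n(log N)·(1 + O(1/log log N)) as N → ∞. -/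
set_option maxHeartbeats 1000000


open Real Filter

lemma zIter_succ_def (n : ℕ) (y : ℝ) : zIter (n+1) y = y / Real.log (zIter n y) := rfl

lemma zIter_bounds_s19 (n : ℕ) :
    ∀ᶠ y in atTop, Real.sqrt y ≤ zIter n y ∧ zIter n y ≤ y := by
  induction n with
  | zero =>
    filter_upwards [eventually_ge_atTop (1:ℝ)] with y hy
    refine ⟨?_, le_refl _⟩
    have h := Real.sqrt_le_sqrt (by nlinarith : y ≤ y^2)
    rwa [Real.sqrt_sq (by linarith)] at h
  | succ n ih =>
    filter_upwards [ih, eventually_ge_atTop (Real.exp 4)] with y hy hy4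
    obtain ⟨h1, h2⟩ := hy
    have hy0 : (0:ℝ) < y := lt_of_lt_of_le (Real.exp_pos 4) hy4
    have hlogy : (4:ℝ) ≤ Real.log y := by
      rw [← Real.log_exp 4]
      exact Real.log_le_log (Real.exp_pos 4) hy4
    have hsq0 : 0 < Real.sqrt y := Real.sqrt_pos.mpr hy0
    have hz0 : 0 < zIter n y := lt_of_lt_of_le hsq0 h1
    have hB1 : Real.log y / 2 ≤ Real.log (zIter n y) := by
      have := Real.log_le_log hsq0 h1
      rwa [Real.log_sqrt hy0.le] at this
    have hB2 : Real.log (zIter n y) ≤ Real.log y := Real.log_le_log hz0 h2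
    have hBpos : 0 < Real.log (zIter n y) := lt_of_lt_of_le (by linarith) hB1
    have hls : Real.log y ≤ Real.sqrt y := by
      have hq0 : 0 < Real.sqrt (Real.sqrt y) := Real.sqrt_pos.mpr hsq0
      have hsub := Real.log_le_sub_one_of_pos hq0
      have hmul : Real.sqrt (Real.sqrt y) * Real.sqrt (Real.sqrt y) = Real.sqrt y :=
        Real.mul_self_sqrt (Real.sqrt_nonneg y)
      have hlog2 : Real.log y = 4 * Real.log (Real.sqrt (Real.sqrt y)) := by
        rw [Real.log_sqrt (Real.sqrt_nonneg y), Real.log_sqrt hy0.le]; ring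
      nlinarith [sq_nonneg (Real.sqrt (Real.sqrt y) - 2)]
    constructor
    · rw [zIter_succ_def, le_div_iff₀ hBpos]
      calc Real.sqrt y * Real.log (zIter n y) ≤ Real.sqrt y * Real.sqrt y := by
            nlinarith
        _ = y := Real.mul_self_sqrt hy0.le
    · rw [zIter_succ_def, div_le_iff₀ hBpos]
      nlinarith

lemma zIter_key (σ : ℝ) (hσ : 0 < σ) (n : ℕ) :
    ∃ c : ℝ, c > 0 ∧ ∀ᶠ y in atTop,
      |zIter n (σ * y) - σ * zIter n y| ≤ c * σ * zIter n y / Real.log y := by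
  induction n with
  | zero =>
    refine ⟨1, one_pos, ?_⟩
    filter_upwards [eventually_ge_atTop (Real.exp 1)] with y hy
    have hy0 : (0:ℝ) < y := lt_of_lt_of_le (Real.exp_pos 1) hy
    have hlog : (1:ℝ) ≤ Real.log y := by
      rw [← Real.log_exp 1]
      exact Real.log_le_log (Real.exp_pos 1) hy
    simp only [zIter, sub_self, abs_zero]
    positivity
  | succ n ih =>
    obtain ⟨c, hc, hev⟩ := ih
    set K := |Real.log σ| + Real.log 2 with hK
    have hK0 : 0 ≤ K := by
      have := abs_nonneg (Real.log σ)
      have h2 : 0 < Real.log 2 := Real.log_pos (by norm_num)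
      linarith
    refine ⟨8*K + 1, by linarith, ?_⟩
    filter_upwards [zIter_bounds_s19 n, hev,
      Real.tendsto_log_atTop.eventually_ge_atTop 4,
      Real.tendsto_log_atTop.eventually_ge_atTop (2*c),
      Real.tendsto_log_atTop.eventually_ge_atTop (4*(Real.log 2 - Real.log σ)),
      eventually_gt_atTop (0:ℝ)] with y hy hIH h4 h2c hσ4 hy0
    obtain ⟨h1, h2⟩ := hy
    set L := Real.log y with hL
    set B := Real.log (zIter n y) with hB
    set A := Real.log (zIter n (σ * y)) with hA
    have hLpos : (0:ℝ) < L := by linarith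
    have hsq0 : 0 < Real.sqrt y := Real.sqrt_pos.mpr hy0
    have hz0 : 0 < zIter n y := lt_of_lt_of_le hsq0 h1
    have hB1 : L / 2 ≤ B := by
      have := Real.log_le_log hsq0 h1
      rwa [Real.log_sqrt hy0.le] at this
    have hB2 : B ≤ L := Real.log_le_log hz0 h2
    have hBpos : 0 < B := by linarith
    -- from IH: z_n(σy) is between σ z_n y / 2 and 2 σ z_n y
    have hIH' : c * σ * zIter n y / L ≤ σ * zIter n y / 2 := by
      rw [div_le_div_iff₀ hLpos (by norm_num : (0:ℝ) < 2)]
      nlinarith [mul_nonneg (mul_pos hσ hz0).le (by linarith : (0:ℝ) ≤ L - 2*c)]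
    have habs := abs_le.mp hIH
    have hlo : σ * zIter n y / 2 ≤ zIter n (σ * y) := by linarith
    have hhi : zIter n (σ * y) ≤ 2 * (σ * zIter n y) := by nlinarith
    have hzσ0 : 0 < zIter n (σ * y) := lt_of_lt_of_le (by positivity) hlo
    have hA1 : Real.log σ + B - Real.log 2 ≤ A := by
      have h := Real.log_le_log (by positivity) hlo
      rwa [Real.log_div (by positivity) (by norm_num), Real.log_mul hσ.ne' hz0.ne'] at h
    have hA2 : A ≤ Real.log 2 + (Real.log σ + B) := by
      have h := Real.log_le_log hzσ0 hhi
      rwa [Real.log_mul (by norm_num) (by positivity), Real.log_mul hσ.ne' hz0.ne'] at h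
    have hAbig : L / 4 ≤ A := by linarith
    have hApos : 0 < A := by linarith
    have hΔ : |B - A| ≤ K := by
      rw [abs_le]
      constructor
      · have := le_abs_self (Real.log σ); linarith
      · have := neg_abs_le (Real.log σ); linarith
    rw [zIter_succ_def, zIter_succ_def, ← hA, ← hB]
    clear_value A B L
    have key1 : σ * y / A - σ * (y / B) = σ * y * (B - A) / (A * B) := by
      field_simp
    rw [key1]
    have habs2 : |σ * y * (B - A) / (A * B)| = σ * y * |B - A| / (A * B) := by
      rw [abs_div, abs_mul, abs_mul, abs_of_pos hσ, abs_of_pos hy0,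
        abs_of_pos (mul_pos hApos hBpos)]
    rw [habs2]
    have step1 : σ * y * |B - A| / (A * B) ≤ σ * y * K / (A * B) := by
      gcongr
    have hKL : K * L ≤ (8*K + 1) * A := by nlinarith
    have step2 : σ * y * K / (A * B) ≤ (8*K + 1) * σ * (y / B) / L := by
      have e1 : (8*K + 1) * σ * (y / B) / L = ((8*K + 1) * σ * y) / (B * L) := by
        field_simp
      rw [e1, div_le_div_iff₀ (mul_pos hApos hBpos) (mul_pos hBpos hLpos)]
      have h' := mul_le_mul_of_nonneg_left hKL (le_of_lt (mul_pos (mul_pos hσ hy0) hBpos))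
      calc σ * y * K * (B * L) = σ * y * B * (K * L) := by ring
        _ ≤ σ * y * B * ((8*K + 1) * A) := h'
        _ = (8*K + 1) * σ * y * (A * B) := by ring
    linarith

theorem zIter_sigma_asymptotic (σ : ℝ) (hσ : 0 < σ) (n : ℕ) :
    ∃ c : ℝ, c > 0 ∧ ∃ N₀ : ℕ, ∀ N : ℕ, N ≥ N₀ →
      |zIter n (σ * Real.log (N : ℝ)) - σ * zIter n (Real.log (N : ℝ))| ≤
        c * σ * zIter n (Real.log (N : ℝ)) / Real.log (Real.log (N : ℝ)) := by
  obtain ⟨c, hc, hev⟩ := zIter_key σ hσ n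
  have h := (Real.tendsto_log_atTop.comp tendsto_natCast_atTop_atTop).eventually hev
  rw [Filter.eventually_atTop] at h
  obtain ⟨N₀, hN₀⟩ := h
  exact ⟨c, hc, N₀, fun N hN => hN₀ N hN⟩
end
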